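/- arXiv:0906.4321 — 2 statements merged into one kernel-verified Lean document; each statement's English description precedes it below -/
import Mathlib

section
/- (Soundness of Gen_∀) If Φ is countably infinite, φ is a sentence valid in the class of all extended awareness structures over Φ, and q is any primitive proposition, then ∀x φ[q/x] is valid in that class. -/
/-!
Fix a model `M`, a world `s` and a quantifier-free sentence `γ` over `L(s)`. As `x` is fresh, the
instance of `∀x φ[q/x]` at `γ` is `φ[q/γ]`. A simultaneous substitution `ρ` of quantifier-free
sentences for primitive propositions turns `M` into the model `M.comap ρ` on the same frame that
reads the atom `p` as `ρ p`; it inherits agpp and ka, and satisfies `χ` at `t` iff `M` satisfies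
`χ[ρ]`, provided every atom of `M` is still named by some `ρ p`, which is what makes the quantifier
clauses of the two models match. Applying validity of `φ` in `M.comap ρ` gives validity of `φ[ρ]`.
Take `ρ q = γ`; the other atoms must still name all of `Φ` although `q` is taken, which an
infinite `Φ` allows by a Hilbert-hotel shift fixing the finitely many atoms of `φ`, so that
`φ[ρ] = φ[q/γ]`.
-/

namespace AwarenessPaper

/-- Formulas of the language `ℒ^{∀,K,X,A}_n(Φ,𝒳)` with `Φ = ℕ` (countably infinite
set of primitive propositions) and variables indexed by `ℕ`; agents indexed by `ℕ`. -/
inductive Fm : Type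
  | prop : ℕ → Fm
  | var  : ℕ → Fm
  | neg  : Fm → Fm
  | and  : Fm → Fm → Fm
  | k    : ℕ → Fm → Fm
  | a    : ℕ → Fm → Fm
  | x    : ℕ → Fm → Fm
  | all  : ℕ → Fm → Fm

namespace Fm

/-- Primitive propositions occurring in a formula. -/
def props : Fm → Set ℕ
  | .prop p => {p}
  | .var _ => ∅
  | .neg φ => props φ
  | .and φ ψ => props φ ∪ props ψ
  | .k _ φ => props φ
  | .a _ φ => props φ
  | .x _ φ => props φ
  | .all _ φ => props φ

/-- Free variables of a formula. -/
def free : Fm → Set ℕ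
  | .prop _ => ∅
  | .var v => {v}
  | .neg φ => free φ
  | .and φ ψ => free φ ∪ free ψ
  | .k _ φ => free φ
  | .a _ φ => free φ
  | .x _ φ => free φ
  | .all v φ => free φ \ {v}

/-- All variables occurring in a formula (free or bound). -/
def vars : Fm → Set ℕ
  | .prop _ => ∅
  | .var v => {v}
  | .neg φ => vars φ
  | .and φ ψ => vars φ ∪ vars ψ
  | .k _ φ => vars φ
  | .a _ φ => vars φ
  | .x _ φ => vars φ
  | .all v φ => insert v (vars φ)

/-- Quantifier nesting depth; a formula is quantifier-free iff `qcount φ = 0`. -/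
def qcount : Fm → ℕ
  | .prop _ => 0
  | .var _ => 0
  | .neg φ => qcount φ
  | .and φ ψ => max (qcount φ) (qcount ψ)
  | .k _ φ => qcount φ
  | .a _ φ => qcount φ
  | .x _ φ => qcount φ
  | .all _ φ => qcount φ + 1

/-- `substV v ψ φ` is `φ[x_v/ψ]`: replace free occurrences of variable `v` by `ψ`. -/
def substV (v : ℕ) (ψ : Fm) : Fm → Fm
  | .prop p => .prop p
  | .var u => if u = v then ψ else .var u
  | .neg φ => .neg (substV v ψ φ)
  | .and φ₁ φ₂ => .and (substV v ψ φ₁) (substV v ψ φ₂)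
  | .k i φ => .k i (substV v ψ φ)
  | .a i φ => .a i (substV v ψ φ)
  | .x i φ => .x i (substV v ψ φ)
  | .all u φ => if u = v then .all u φ else .all u (substV v ψ φ)

/-- `substP q ψ φ` is `φ[q/ψ]`: replace the primitive proposition `q` by `ψ`. -/
def substP (q : ℕ) (ψ : Fm) : Fm → Fm
  | .prop p => if p = q then ψ else .prop p
  | .var u => .var u
  | .neg φ => .neg (substP q ψ φ)
  | .and φ₁ φ₂ => .and (substP q ψ φ₁) (substP q ψ φ₂)
  | .k i φ => .k i (substP q ψ φ)
  | .a i φ => .a i (substP q ψ φ)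
  | .x i φ => .x i (substP q ψ φ)
  | .all u φ => .all u (substP q ψ φ)

/-- Rename primitive propositions along `τ`. -/
def rename (τ : ℕ → ℕ) : Fm → Fm
  | .prop p => .prop (τ p)
  | .var u => .var u
  | .neg φ => .neg (rename τ φ)
  | .and φ₁ φ₂ => .and (rename τ φ₁) (rename τ φ₂)
  | .k i φ => .k i (rename τ φ)
  | .a i φ => .a i (rename τ φ)
  | .x i φ => .x i (rename τ φ)
  | .all u φ => .all u (rename τ φ)

def or (φ ψ : Fm) : Fm := .neg (.and (.neg φ) (.neg ψ))
def imp (φ ψ : Fm) : Fm := Fm.or (.neg φ) ψ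
def iff (φ ψ : Fm) : Fm := .and (imp φ ψ) (imp ψ φ)
/-- `A_i^* φ`, an abbreviation for `K_i (φ ∨ ¬φ)`. -/
def astar (i : ℕ) (φ : Fm) : Fm := .k i (Fm.or φ (.neg φ))

end Fm

/-- An extended awareness structure for agents `ℕ` over `Φ = ℕ`, with set of worlds `W`:
each world has a nonempty local language `L s`, a valuation, possibility relations `R i`,
and awareness sets `Aw i s` consisting of formulas over the local language. -/
structure EAS (W : Type) where
  L : W → Set ℕ
  L_ne : ∀ s, (L s).Nonempty
  val : W → ℕ → Bool
  R : ℕ → W → W → Prop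
  Aw : ℕ → W → Set Fm
  Aw_lang : ∀ i s, ∀ φ ∈ Aw i s, Fm.props φ ⊆ L s

namespace EAS

variable {W : Type}

/-- One level of the truth definition; `univ` interprets the bodies of quantifiers
(at one lower quantifier depth).  A formula is true at `s` only if its primitive
propositions all belong to the local language `L s`. -/
def satAux (M : EAS W) (univ : W → Fm → Prop) : W → Fm → Prop
  | s, .prop p => p ∈ M.L s ∧ M.val s p = true
  | _, .var _ => False
  | s, .neg φ => Fm.props φ ⊆ M.L s ∧ ¬ satAux M univ s φ
  | s, .and φ ψ => satAux M univ s φ ∧ satAux M univ s ψ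
  | s, .k i φ => Fm.props φ ⊆ M.L s ∧ ∀ t, M.R i s t → satAux M univ t φ
  | s, .a i φ => φ ∈ M.Aw i s
  | s, .x i φ => (Fm.props φ ⊆ M.L s ∧ ∀ t, M.R i s t → satAux M univ t φ) ∧ φ ∈ M.Aw i s
  | s, .all v φ => Fm.props φ ⊆ M.L s ∧
      ∀ β : Fm, Fm.qcount β = 0 → Fm.free β = ∅ → Fm.props β ⊆ M.L s →
        univ s (Fm.substV v β φ)

/-- Truth with quantifier-depth budget `n`. -/
def satN (M : EAS W) : ℕ → W → Fm → Prop
  | 0 => M.satAux fun _ _ => False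
  | n + 1 => M.satAux (M.satN n)

/-- `(M,s) ⊨ φ`. Quantifiers range over quantifier-free sentences of the local language. -/
def sat (M : EAS W) (s : W) (φ : Fm) : Prop := M.satN (Fm.qcount φ) s φ

/-- Awareness is generated by primitive propositions. -/
def agpp (M : EAS W) : Prop :=
  ∀ i s (φ : Fm), φ ∈ M.Aw i s ↔ ∀ p ∈ Fm.props φ, Fm.prop p ∈ M.Aw i s

/-- Agents know what they are aware of. -/
def ka (M : EAS W) : Prop := ∀ i s t, M.R i s t → M.Aw i s = M.Aw i t

end EAS

/-- (Weak) validity in the class `𝒩_n(Φ,𝒳)` of all extended awareness structures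
satisfying agpp and ka: truth at every world whose local language contains all the
primitive propositions of the formula. -/
def Valid (φ : Fm) : Prop :=
  ∀ (W : Type) (M : EAS W), M.agpp → M.ka → ∀ s : W, Fm.props φ ⊆ M.L s → M.sat s φ

namespace Fm

def subst (ρ : ℕ → Fm) : Fm → Fm
  | .prop p => ρ p
  | .var u => .var u
  | .neg φ => .neg (subst ρ φ)
  | .and φ ψ => .and (subst ρ φ) (subst ρ ψ)
  | .k i φ => .k i (subst ρ φ)
  | .a i φ => .a i (subst ρ φ)
  | .x i φ => .x i (subst ρ φ)
  | .all u φ => .all u (subst ρ φ)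

variable {ρ ρ' : ℕ → Fm}

theorem props_subst (χ : Fm) : (subst ρ χ).props = ⋃ p ∈ χ.props, (ρ p).props := by
  induction χ <;> simp_all [subst, props, Set.iUnion_or, Set.iUnion_union_distrib]

theorem qcount_subst (hρ : ∀ p, (ρ p).qcount = 0) (χ : Fm) : (subst ρ χ).qcount = χ.qcount := by
  induction χ <;> simp_all [subst, qcount]

theorem free_subst (hρ : ∀ p, (ρ p).free = ∅) (χ : Fm) : (subst ρ χ).free = χ.free := by
  induction χ <;> simp_all [subst, free]

theorem subst_congr {χ : Fm} (h : ∀ p ∈ χ.props, ρ p = ρ' p) : subst ρ χ = subst ρ' χ := by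
  induction χ <;> simp_all [subst, props]

theorem subst_subst (χ : Fm) : subst ρ (subst ρ' χ) = subst (fun p => subst ρ (ρ' p)) χ := by
  induction χ <;> simp_all [subst]

theorem subst_prop (χ : Fm) : subst prop χ = χ := by
  induction χ <;> simp_all [subst]

theorem substP_eq_subst (q : ℕ) (γ χ : Fm) :
    substP q γ χ = subst (Function.update prop q γ) χ := by
  induction χ <;> simp_all [substP, subst, Function.update_apply]

theorem props_finite (χ : Fm) : χ.props.Finite := by
  induction χ <;> simp_all [props]

theorem substV_of_not_mem_free {v : ℕ} {γ χ : Fm} (h : v ∉ χ.free) : substV v γ χ = χ := by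
  induction χ with
  | var u => simp_all [substV, free, Ne.symm]
  | all u φ ih =>
    by_cases huv : u = v
    · simp [substV, huv]
    · simp only [free, Set.mem_sdiff, Set.mem_singleton_iff, not_and_not_right] at h
      simp [substV, huv, ih fun hv => huv (h hv).symm]
  | _ => simp_all [substV, free]

theorem subst_substV (hρ : ∀ p, (ρ p).free = ∅) (v : ℕ) (γ χ : Fm) :
    subst ρ (substV v γ χ) = substV v (subst ρ γ) (subst ρ χ) := by
  induction χ with
  | prop p => simp [subst, substV, substV_of_not_mem_free, hρ p]
  | var u => by_cases h : u = v <;> simp [subst, substV, h]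
  | all u φ ih => by_cases h : u = v <;> simp [subst, substV, h, ih]
  | _ => simp_all [subst, substV]

theorem substV_substP_var {x q : ℕ} {γ χ : Fm} (hx : x ∉ χ.vars) :
    substV x γ (substP q (.var x) χ) = substP q γ χ := by
  induction χ with
  | prop p => by_cases h : p = q <;> simp [substP, substV, h]
  | _ => simp_all [substP, substV, vars, eq_comm]

theorem qcount_substP {q : ℕ} {γ : Fm} (hγ : γ.qcount = 0) (χ : Fm) :
    (substP q γ χ).qcount = χ.qcount := by
  induction χ with
  | prop p => by_cases h : p = q <;> simp [substP, qcount, h, hγ]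
  | _ => simp_all [substP, qcount]

theorem props_substP_subset (q : ℕ) (γ χ : Fm) :
    (substP q γ χ).props ⊆ χ.props \ {q} ∪ γ.props := by
  induction χ with
  | prop p => by_cases h : p = q <;> simp [substP, props, h]
  | and φ ψ ih₁ ih₂ =>
    refine Set.union_subset (ih₁.trans ?_) (ih₂.trans ?_) <;> simp only [props] <;> gcongr <;> simp
  | _ => simp_all [substP, props]

theorem props_sdiff_subset_props_substP (q : ℕ) (γ χ : Fm) :
    χ.props \ {q} ⊆ (substP q γ χ).props := by
  induction χ with
  | prop p => by_cases h : p = q <;> simp [substP, props, h]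
  | and φ ψ ih₁ ih₂ =>
    simp only [props, Set.union_sdiff_distrib, substP]
    exact Set.union_subset_union ih₁ ih₂
  | _ => simp_all [substP, props]

end Fm

namespace EAS

variable {W : Type} (M : EAS W)

theorem props_subset_of_satAux {u : W → Fm → Prop} {s : W} {χ : Fm} (h : M.satAux u s χ) :
    χ.props ⊆ M.L s := by
  induction χ generalizing s with
  | prop p => simpa [Fm.props, satAux] using h.1
  | var v => exact h.elim
  | and φ ψ ih₁ ih₂ => exact Set.union_subset (ih₁ h.1) (ih₂ h.2)
  | a i φ => exact M.Aw_lang i s φ h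
  | x i φ => exact h.1.1
  | neg φ | k i φ | all v φ => exact h.1

theorem satAux_iff_of_qcount_eq_zero {χ : Fm} (hχ : χ.qcount = 0) (u u' : W → Fm → Prop)
    (s : W) : M.satAux u s χ ↔ M.satAux u' s χ := by
  induction χ generalizing s with
  | neg φ ih => exact and_congr Iff.rfl (not_congr (ih hχ s))
  | and φ ψ ih₁ ih₂ =>
    rw [Fm.qcount, Nat.max_eq_zero_iff] at hχ
    exact and_congr (ih₁ hχ.1 s) (ih₂ hχ.2 s)
  | k i φ ih => exact and_congr Iff.rfl (forall₂_congr fun t _ => ih hχ t)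
  | x i φ ih => exact and_congr (and_congr Iff.rfl (forall₂_congr fun t _ => ih hχ t)) Iff.rfl
  | all v φ => simp [Fm.qcount] at hχ
  | prop | var | a => exact Iff.rfl

open Classical in
noncomputable def comap (ρ : ℕ → Fm) (hρ : ∀ r, ∃ p, ρ p = .prop r) : EAS W where
  L t := {p | (ρ p).props ⊆ M.L t}
  L_ne t := by
    obtain ⟨r, hr⟩ := M.L_ne t
    obtain ⟨p, hp⟩ := hρ r
    exact ⟨p, by simpa [hp, Fm.props] using hr⟩
  val t p := decide (M.satN 0 t (ρ p))
  R := M.R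
  Aw i t := {ψ | Fm.subst ρ ψ ∈ M.Aw i t}
  Aw_lang i t ψ hψ p hp :=
    (Set.subset_biUnion_of_mem hp).trans ((Fm.props_subst ψ).symm ▸ M.Aw_lang i t _ hψ)

variable {M} {ρ : ℕ → Fm} {hρ : ∀ r, ∃ p, ρ p = .prop r}

theorem props_subset_comap_L_iff {χ : Fm} {t : W} :
    χ.props ⊆ (M.comap ρ hρ).L t ↔ (Fm.subst ρ χ).props ⊆ M.L t := by
  rw [Fm.props_subst, Set.iUnion₂_subset_iff]
  rfl

theorem agpp.comap (hag : M.agpp) : (M.comap ρ hρ).agpp := by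
  intro i t ψ
  change Fm.subst ρ ψ ∈ M.Aw i t ↔ ∀ p ∈ ψ.props, ρ p ∈ M.Aw i t
  simp only [hag i t (Fm.subst ρ _), hag i t (ρ _), Fm.props_subst, Set.mem_iUnion₂]
  grind

theorem ka.comap (hka : M.ka) : (M.comap ρ hρ).ka := by
  intro i s t hR
  change {ψ | Fm.subst ρ ψ ∈ M.Aw i s} = {ψ | Fm.subst ρ ψ ∈ M.Aw i t}
  rw [hka i s t hR]

open Classical in
theorem satAux_comap_prop {u' u : W → Fm → Prop} (hqf : ∀ p, (ρ p).qcount = 0) (p : ℕ) (t : W) :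
    (M.comap ρ hρ).satAux u' t (.prop p) ↔ M.satAux u t (ρ p) := by
  rw [M.satAux_iff_of_qcount_eq_zero (hqf p) u (fun _ _ => False)]
  change (ρ p).props ⊆ M.L t ∧ decide (M.satN 0 t (ρ p)) = true ↔ M.satN 0 t (ρ p)
  simpa using fun h : M.satN 0 t (ρ p) => M.props_subset_of_satAux h

theorem exists_subst_eq_of_qcount_eq_zero (hρ : ∀ r, ∃ p, ρ p = .prop r) {δ : Fm}
    (hδq : δ.qcount = 0) (hδf : δ.free = ∅) {t : W} (hδL : δ.props ⊆ M.L t) :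
    ∃ β, β.qcount = 0 ∧ β.free = ∅ ∧ β.props ⊆ (M.comap ρ hρ).L t ∧ Fm.subst ρ β = δ := by
  obtain ⟨τ, hτ⟩ := Classical.axiomOfChoice hρ
  have hβ : Fm.subst ρ (Fm.subst (fun r => .prop (τ r)) δ) = δ := by
    simp [Fm.subst_subst, Fm.subst, hτ, Fm.subst_prop]
  refine ⟨Fm.subst (fun r => .prop (τ r)) δ, ?_, ?_, ?_, hβ⟩
  · rwa [Fm.qcount_subst fun _ => rfl]
  · rwa [Fm.free_subst fun _ => rfl]
  · rwa [props_subset_comap_L_iff, hβ]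

theorem satAux_comap (hqf : ∀ p, (ρ p).qcount = 0) (hfree : ∀ p, (ρ p).free = ∅)
    {u' u : W → Fm → Prop} (hu : ∀ t χ, u' t χ ↔ u t (Fm.subst ρ χ)) (χ : Fm) (t : W) :
    (M.comap ρ hρ).satAux u' t χ ↔ M.satAux u t (Fm.subst ρ χ) := by
  induction χ generalizing t with
  | prop p => exact satAux_comap_prop hqf p t
  | var v => exact Iff.rfl
  | neg φ ih => exact and_congr props_subset_comap_L_iff (not_congr (ih t))
  | and φ ψ ih₁ ih₂ => exact and_congr (ih₁ t) (ih₂ t)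
  | k i φ ih => exact and_congr props_subset_comap_L_iff (forall₂_congr fun t' _ => ih t')
  | a i φ => exact Iff.rfl
  | x i φ ih =>
    exact and_congr (and_congr props_subset_comap_L_iff (forall₂_congr fun t' _ => ih t')) Iff.rfl
  | all v φ =>
    refine and_congr props_subset_comap_L_iff ⟨fun h δ hδq hδf hδL => ?_, fun h β hβq hβf hβL => ?_⟩
    · obtain ⟨β, hβq, hβf, hβL, rfl⟩ := exists_subst_eq_of_qcount_eq_zero hρ hδq hδf hδL
      rw [← Fm.subst_substV hfree, ← hu]
      exact h β hβq hβf hβL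
    · rw [hu, Fm.subst_substV hfree]
      exact h _ (by rwa [Fm.qcount_subst hqf]) (by rwa [Fm.free_subst hfree])
        (props_subset_comap_L_iff.1 hβL)

theorem satN_comap (hqf : ∀ p, (ρ p).qcount = 0) (hfree : ∀ p, (ρ p).free = ∅) (n : ℕ)
    (t : W) (χ : Fm) : (M.comap ρ hρ).satN n t χ ↔ M.satN n t (Fm.subst ρ χ) := by
  induction n generalizing t χ with
  | zero =>
    exact satAux_comap (u' := fun _ _ => False) (u := fun _ _ => False) hqf hfree
      (fun _ _ => Iff.rfl) χ t
  | succ n ih => exact satAux_comap hqf hfree ih χ t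

theorem sat_comap (hqf : ∀ p, (ρ p).qcount = 0) (hfree : ∀ p, (ρ p).free = ∅) (t : W)
    (χ : Fm) : (M.comap ρ hρ).sat t χ ↔ M.sat t (Fm.subst ρ χ) := by
  rw [sat, sat, Fm.qcount_subst hqf]
  exact satN_comap hqf hfree _ t χ

end EAS

theorem Valid.subst {φ : Fm} (hv : Valid φ) {ρ : ℕ → Fm} (hqf : ∀ p, (ρ p).qcount = 0)
    (hfree : ∀ p, (ρ p).free = ∅) (hρ : ∀ r, ∃ p, ρ p = .prop r) : Valid (Fm.subst ρ φ) :=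
  fun W M hag hka s hs => (EAS.sat_comap hqf hfree s φ).1 <|
    hv W (M.comap ρ hρ) hag.comap hka.comap s (EAS.props_subset_comap_L_iff.2 hs)

theorem exists_surjOn_compl_singleton_fixing {S : Set ℕ} (hS : S.Finite) (q : ℕ) :
    ∃ f : ℕ → ℕ, Set.SurjOn f {q}ᶜ Set.univ ∧ ∀ p ∈ S, f p = p := by
  obtain ⟨M, hM⟩ := (hS.insert q).bddAbove
  have hqM : q ≤ M := hM (Set.mem_insert q S)
  -- shift the names above `M` up by one, making room for `q` at `M + 1`
  refine ⟨fun p => if p ≤ M then p else if p = M + 1 then q else p - 1, ?_,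
    fun p hp => if_pos (hM (Set.mem_insert_of_mem q hp))⟩
  intro r _
  by_cases hrq : r = q
  · exact ⟨M + 1, by simp; omega, by simp [hrq]⟩
  by_cases hr : r ≤ M
  · exact ⟨r, hrq, if_pos hr⟩
  · exact ⟨r + 1, by simp; omega, by simp; split_ifs <;> omega⟩

theorem stmt7_general (φ : Fm) (hv : Valid φ)
    (q : ℕ) (x : ℕ) (hx : x ∉ Fm.vars φ) :
    Valid (.all x (Fm.substP q (.var x) φ)) := by
  intro W M hag hka s hs
  refine ⟨hs, fun γ hγq hγf hγL => ?_⟩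
  obtain ⟨f, hf_surj, hf_fix⟩ := exists_surjOn_compl_singleton_fixing φ.props_finite q
  set ρ := Function.update (fun p => Fm.prop (f p)) q γ
  have hρφ : Fm.subst ρ φ = Fm.substP q γ φ := by
    rw [Fm.substP_eq_subst]
    refine Fm.subst_congr fun p hp => ?_
    by_cases h : p = q <;> simp [ρ, h, hf_fix p hp]
  have hqf : ∀ p, (ρ p).qcount = 0 := fun p => by
    by_cases h : p = q <;> simp [ρ, h, hγq, Fm.qcount]
  have hfree : ∀ p, (ρ p).free = ∅ := fun p => by
    by_cases h : p = q <;> simp [ρ, h, hγf, Fm.free]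
  have hsurj : ∀ r, ∃ p, ρ p = .prop r := fun r => by
    obtain ⟨p, hpq, rfl⟩ := hf_surj (Set.mem_univ r)
    exact ⟨p, by simp [ρ, show p ≠ q from hpq]⟩
  have hprops : (Fm.substP q γ φ).props ⊆ M.L s :=
    (Fm.props_substP_subset q γ φ).trans <|
      Set.union_subset ((Fm.props_sdiff_subset_props_substP q (.var x) φ).trans hs) hγL
  have hsat := hv.subst hqf hfree hsurj W M hag hka s (hρφ ▸ hprops)
  rw [hρφ] at hsat
  rwa [Fm.substV_substP_var hx, Fm.qcount_substP (γ := .var x) rfl,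
    ← Fm.qcount_substP (q := q) hγq]

/-- Soundness of Gen_∀: if the sentence `φ` is valid and `q` is a primitive proposition,
then `∀x φ[q/x]` is valid (for `x` substitutable for `q` in `φ`, i.e. `x` fresh). -/
theorem stmt7 (φ : Fm) (hsent : Fm.free φ = ∅) (hv : Valid φ)
    (q : ℕ) (x : ℕ) (hx : x ∉ Fm.vars φ) :
    Valid (.all x (Fm.substP q (.var x) φ)) :=
  stmt7_general φ hv q x hx

end AwarenessPaper
end

section
/- (Acceptability is preserved by adding a sentence) If Γ is acceptable with respect to L and τ is a sentence over L, then Γ ∪ {τ} is acceptable with respect to L. -/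
namespace AwarenessPaper

namespace Fm

/-- Primitive propositions of a formula, as a list. -/
def propList : Fm → List ℕ
  | .prop p => [p]
  | .var _ => []
  | .neg φ => propList φ
  | .and φ ψ => propList φ ++ propList ψ
  | .k _ φ => propList φ
  | .a _ φ => propList φ
  | .x _ φ => propList φ
  | .all _ φ => propList φ

def top : Fm := Fm.or (.prop 0) (.neg (.prop 0))
def bot : Fm := .neg top

/-- Boolean evaluation of the propositional skeleton of a formula, treating
everything other than `¬` and `∧` as an atom.  `∀ v, beval v φ = true` says
exactly that `φ` is a substitution instance of a propositional tautology. -/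
def beval (v : Fm → Bool) : Fm → Bool
  | .neg φ => ! beval v φ
  | .and φ ψ => beval v φ && beval v ψ
  | φ => v φ

end Fm

/-- Conjunction of a list of formulas (the empty conjunction is `⊤`). -/
def conj : List Fm → Fm
  | [] => Fm.top
  | φ :: l => Fm.and φ (conj l)

/-- The theorems of the axiom system `AX^{X,A,∀}_e`:
Prop, AGPP, XA, FA*_X, K_X, A0_X, 1_∀, K_∀, N_∀, Barcan*_X, MP, Gen_X, Gen_∀. -/
inductive Thm : Fm → Prop
  | taut (φ : Fm) (h : ∀ v : Fm → Bool, Fm.beval v φ = true) : Thm φ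
  | agppAx (i : ℕ) (φ : Fm) :
      Thm (Fm.iff (.a i φ) (conj ((Fm.propList φ).map fun p => Fm.a i (.prop p))))
  | xaAx (i : ℕ) (φ : Fm) : Thm (Fm.imp (.a i φ) (.x i (.a i φ)))
  | faAx (i x : ℕ) :
      Thm (Fm.imp (.all x (.neg (.a i (.var x)))) (.x i (.all x (.neg (.a i (.var x))))))
  | kAx (i : ℕ) (φ ψ : Fm) :
      Thm (Fm.imp (.and (.x i φ) (.x i (Fm.imp φ ψ))) (.x i ψ))
  | a0Ax (i : ℕ) (φ : Fm) : Thm (Fm.imp (.x i φ) (.a i φ))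
  | oneAll (x : ℕ) (φ ψ : Fm) (h1 : Fm.qcount ψ = 0) (h2 : Fm.free ψ = ∅) :
      Thm (Fm.imp (.all x φ) (Fm.substV x ψ φ))
  | kAll (x : ℕ) (φ ψ : Fm) :
      Thm (Fm.imp (.all x (Fm.imp φ ψ)) (Fm.imp (.all x φ) (.all x ψ)))
  | nAll (x : ℕ) (φ : Fm) (h : x ∉ Fm.free φ) : Thm (Fm.imp φ (.all x φ))
  | barcanAx (i x : ℕ) (φ : Fm) :
      Thm (Fm.imp (.and (.a i (.all x φ)) (.all x (Fm.imp (.a i (.var x)) (.x i φ))))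
                  (.x i (Fm.imp (.all x (.a i (.var x))) (.all x φ))))
  | mp (φ ψ : Fm) : Thm (Fm.imp φ ψ) → Thm φ → Thm ψ
  | genX (i : ℕ) (φ : Fm) : Thm φ → Thm (Fm.imp (.a i φ) (.x i φ))
  | genAll (x q : ℕ) (φ : Fm) : Thm φ → Thm (.all x (Fm.substP q (.var x) φ))

/-- `Γ ⊢ φ`: derivable from finitely many members of `Γ` and theorems of
`AX^{X,A,∀}_e` by modus ponens. -/
def Derivable (Γ : Set Fm) (φ : Fm) : Prop :=
  ∃ l : List Fm, (∀ ψ ∈ l, ψ ∈ Γ) ∧ Thm (Fm.imp (conj l) φ)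

def Consistent (Γ : Set Fm) : Prop := ¬ Derivable Γ Fm.bot

/-- `Γ` is acceptable with respect to `L`: whenever `φ` is a formula over `L`
with (at most) the free variable `x` and `Γ ⊢ φ[x/q]` for all but finitely many
primitive propositions `q ∈ L`, then `Γ ⊢ ∀x φ`. -/
def Acceptable (Γ : Set Fm) (L : Set ℕ) : Prop :=
  ∀ (x : ℕ) (φ : Fm), Fm.props φ ⊆ L → Fm.free φ ⊆ {x} →
    {q ∈ L | ¬ Derivable Γ (Fm.substV x (.prop q) φ)}.Finite →
    Derivable Γ (.all x φ)

/-- `Γ` is a maximal consistent set of sentences with respect to `L`. -/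
def MaxConsistent (Γ : Set Fm) (L : Set ℕ) : Prop :=
  (∀ φ ∈ Γ, Fm.props φ ⊆ L ∧ Fm.free φ = ∅) ∧ Consistent Γ ∧
    ∀ φ : Fm, Fm.props φ ⊆ L → Fm.free φ = ∅ → Consistent (insert φ Γ) → φ ∈ Γ



namespace Fm

@[simp]
lemma beval_imp (v : Fm → Bool) (φ ψ : Fm) : beval v (imp φ ψ) = (!beval v φ || beval v ψ) := by
  simp [imp, or, beval]

@[simp]
lemma beval_top (v : Fm → Bool) : beval v top = true := by
  simp [top, or, beval]

@[simp]
lemma beval_conj (v : Fm → Bool) (l : List Fm) : beval v (conj l) = l.all (beval v) := by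
  induction l with
  | nil => simp [conj]
  | cons φ l ih => simp [conj, beval, ih]

lemma substV_of_not_mem_free_s16 {x : ℕ} {χ : Fm} (φ : Fm) (h : x ∉ free φ) : substV x χ φ = φ := by
  induction φ with
  | prop p => rfl
  | var u =>
    simp only [free, Set.mem_singleton_iff] at h
    simp [substV, Ne.symm h]
  | neg φ ih => simp [substV, ih h]
  | and φ ψ ihφ ihψ =>
    simp only [free, Set.mem_union, not_or] at h
    simp [substV, ihφ h.1, ihψ h.2]
  | k i φ ih => simp [substV, ih h]
  | a i φ ih => simp [substV, ih h]
  | x i φ ih => simp [substV, ih h]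
  | all u φ ih =>
    by_cases hu : u = x
    · simp [substV, hu]
    · simp only [free, Set.mem_sdiff, Set.mem_singleton_iff, not_and, not_not] at h
      simp [substV, hu, ih fun hx => hu (h hx).symm]

@[simp]
lemma substV_imp (x : ℕ) (χ φ ψ : Fm) : substV x χ (imp φ ψ) = imp (substV x χ φ) (substV x χ ψ) :=
  rfl

@[simp]
lemma props_imp (φ ψ : Fm) : props (imp φ ψ) = props φ ∪ props ψ :=
  rfl

@[simp]
lemma free_imp (φ ψ : Fm) : free (imp φ ψ) = free φ ∪ free ψ :=
  rfl

end Fm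

namespace Thm

lemma of_taut_imp {φ ψ : Fm} (h : ∀ v, φ.beval v = true → ψ.beval v = true) (hφ : Thm φ) :
    Thm ψ :=
  mp φ ψ (taut _ fun v => by cases hv : φ.beval v <;> simp [hv, h v]) hφ

lemma of_taut_imp₂ {φ ψ χ : Fm}
    (h : ∀ v, φ.beval v = true → ψ.beval v = true → χ.beval v = true)
    (hφ : Thm φ) (hψ : Thm ψ) : Thm χ :=
  mp ψ χ (of_taut_imp (ψ := .imp ψ χ) (fun v hv => by
    cases hψv : ψ.beval v <;> simp [hψv, h v hv]) hφ) hψ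

end Thm

namespace Derivable

variable {Γ : Set Fm} {φ ψ : Fm}

lemma of_thm (h : Thm φ) : Derivable Γ φ :=
  ⟨[], by simp, h.of_taut_imp fun v hv => by simp [hv]⟩

lemma of_mem (h : φ ∈ Γ) : Derivable Γ φ :=
  ⟨[φ], by simpa using h, Thm.taut _ fun v => by cases hv : φ.beval v <;> simp [hv]⟩

lemma mp (hφψ : Derivable Γ (.imp φ ψ)) (hφ : Derivable Γ φ) : Derivable Γ ψ := by
  obtain ⟨l₁, hl₁, t₁⟩ := hφψ
  obtain ⟨l₂, hl₂, t₂⟩ := hφ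
  refine ⟨l₁ ++ l₂, fun χ hχ => (List.mem_append.mp hχ).elim (hl₁ χ) (hl₂ χ), ?_⟩
  refine Thm.of_taut_imp₂ (fun v h₁ h₂ => ?_) t₁ t₂
  simp only [Fm.beval_imp, Fm.beval_conj, List.all_append] at h₁ h₂ ⊢
  grind

lemma mono {Γ' : Set Fm} (hΓ : Γ ⊆ Γ') (h : Derivable Γ φ) : Derivable Γ' φ :=
  let ⟨l, hl, t⟩ := h
  ⟨l, fun χ hχ => hΓ (hl χ hχ), t⟩

lemma imp_of_insert {τ : Fm} (h : Derivable (insert τ Γ) φ) : Derivable Γ (.imp τ φ) := by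
  classical
  obtain ⟨l, hl, t⟩ := h
  refine ⟨l.filter (· ∈ Γ), fun χ hχ => by simpa using (List.mem_filter.mp hχ).2, ?_⟩
  refine t.of_taut_imp fun v hlφ => ?_
  simp only [Fm.beval_imp, Fm.beval_conj] at hlφ ⊢
  grind

lemma all_of_all_imp {x : ℕ} {τ : Fm} (hx : x ∉ τ.free) (h : Derivable Γ (.all x (.imp τ φ)))
    (hτ : Derivable Γ τ) : Derivable Γ (.all x φ) :=
  (of_thm (Thm.kAll x τ φ) |>.mp h).mp ((of_thm (Thm.nAll x τ hx)).mp hτ)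

end Derivable

/-- Acceptability is preserved by adding a sentence over `L`. -/
theorem stmt16 (Γ : Set Fm) (L : Set ℕ) (hΓ : Acceptable Γ L)
    (τ : Fm) (hτs : Fm.free τ = ∅) (hτL : Fm.props τ ⊆ L) :
    Acceptable (insert τ Γ) L := by
  intro x φ hφL hφx hfin
  have hx : x ∉ τ.free := by simp [hτs]
  -- apply the acceptability of `Γ` to `τ ⇒ φ`, whose instances follow by the deduction theorem
  have hΓτφ : Derivable Γ (.all x (.imp τ φ)) := by
    refine hΓ x _ (by simp [hτL, hφL]) (by simpa [hτs] using hφx) (hfin.subset ?_)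
    rintro q ⟨hqL, hq⟩
    refine ⟨hqL, fun hqφ => hq ?_⟩
    simpa [Fm.substV_of_not_mem_free_s16 τ hx] using hqφ.imp_of_insert
  exact (hΓτφ.mono (Set.subset_insert τ Γ)).all_of_all_imp hx (.of_mem (Set.mem_insert τ Γ))

end AwarenessPaper
end
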